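/- arXiv:1503.05225 — 6 statements merged into one kernel-verified Lean document; each statement's English description precedes it below -/
import Mathlib

section
/- For all x, y ∈ (0,1], the integral over ω ∈ ℝ of h(x,y,ω)·κ_χ(ω) dω equals f_χ(x,y) = (x−y)²/(x+y). (This is the kernel representation of the one-dimensional symmetrized χ² divergence.) -/
/-!
Expanding the squares, `h x y ω = x + y - 2 √x √y cos ((log x - log y) ω)`, so everything rests
on the Fourier transform of `sech (π ω)`, which is self-dual:
`∫ cos (b ω) sech (π ω) dω = sech (b / 2)`. This comes from the Mellin transform `∫₀^∞ t^(s-1) / (1 + t) dt = π / sin (π s)` (the Beta integral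
`B(s, 1 - s)` after `u = t / (1 + t)`), which on the line `Re s = 1/2` becomes, under `t = e^(-u)`,
a Fourier integral of `sech (u / 2) / 2`. Finally `sech ((log x - log y) / 2) = 2 √x √y / (x + y)`
and `(x + y) - 4 x y / (x + y) = (x - y)² / (x + y)`.
-/

open Real MeasureTheory

/-- The kernel integrand `h(x,y,ω)`. -/
noncomputable def h (x y ω : ℝ) : ℝ :=
  (Real.sqrt x * Real.cos (ω * Real.log x) - Real.sqrt y * Real.cos (ω * Real.log y)) ^ 2 +
  (Real.sqrt x * Real.sin (ω * Real.log x) - Real.sqrt y * Real.sin (ω * Real.log y)) ^ 2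

/-- Hyperbolic secant. -/
noncomputable def sech (t : ℝ) : ℝ := 2 / (Real.exp t + Real.exp (-t))

/-- The JS kernel density `κ(ω)`. -/
noncomputable def kJ (ω : ℝ) : ℝ := 2 * sech (Real.pi * ω) / (Real.log 4 * (1 + 4 * ω ^ 2))

/-- The χ² kernel density `κ_χ(ω)`. -/
noncomputable def kChi (ω : ℝ) : ℝ := sech (Real.pi * ω)

/-- One-dimensional Jensen–Shannon divergence (with `0·log 0 = 0`, `f_J(0,0) = 0`,
which hold automatically since `Real.log 0 = 0` and `0/0 = 0` in Lean). -/
noncomputable def fJ (x y : ℝ) : ℝ :=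
  x * Real.log (2 * x / (x + y)) + y * Real.log (2 * y / (x + y))

/-- One-dimensional symmetrized χ² divergence (with `f_χ(0,0) = 0`,
which holds automatically since `0/0 = 0` in Lean). -/
noncomputable def fChi (x y : ℝ) : ℝ := (x - y) ^ 2 / (x + y)

/-- One-dimensional Hellinger distance. -/
noncomputable def fH (x y : ℝ) : ℝ := (Real.sqrt x - Real.sqrt y) ^ 2

open Set

theorem image_div_one_add_Ioi : (fun t : ℝ => t / (1 + t)) '' Ioi 0 = Ioo 0 1 := by
  ext u
  constructor
  · rintro ⟨t, ht : 0 < t, rfl⟩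
    exact ⟨by positivity, (div_lt_one (by positivity)).2 (by linarith)⟩
  · rintro ⟨hu₀, hu₁⟩
    refine ⟨u / (1 - u), div_pos hu₀ (by linarith), ?_⟩
    field_simp
    ring

theorem strictMonoOn_div_one_add : StrictMonoOn (fun t : ℝ => t / (1 + t)) (Ioi 0) := by
  intro t (ht : 0 < t) r (hr : 0 < r) htr
  rw [div_lt_div_iff₀ (by positivity) (by positivity)]
  linarith

theorem mellin_inv_one_add {s : ℂ} (hs₀ : 0 < s.re) (hs₁ : s.re < 1) :
    mellin (fun t : ℝ => (1 + (t : ℂ))⁻¹) s = π / Complex.sin (π * s) := by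
  have hbeta : Complex.betaIntegral s (1 - s) = π / Complex.sin (π * s) := by
    rw [Complex.betaIntegral_eq_Gamma_mul_div _ _ hs₀ (by simpa using hs₁),
      Complex.Gamma_mul_Gamma_one_sub, add_sub_cancel, Complex.Gamma_one, div_one]
  have hderiv (t : ℝ) (ht : t ∈ Ioi 0) :
      HasDerivWithinAt (fun t : ℝ => t / (1 + t)) (((1 + t) ^ 2)⁻¹) (Ioi 0) t := by
    have ht' : 1 + t ≠ 0 := by rw [mem_Ioi] at ht; positivity
    refine ((hasDerivAt_id' t).div ((hasDerivAt_id' t).const_add 1) ht').hasDerivWithinAt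
      |>.congr_deriv ?_
    ring
  rw [← hbeta, Complex.betaIntegral, intervalIntegral.integral_of_le zero_le_one,
    integral_Ioc_eq_integral_Ioo, ← image_div_one_add_Ioi,
    integral_image_eq_integral_abs_deriv_smul measurableSet_Ioi hderiv
      strictMonoOn_div_one_add.injOn, mellin]
  refine setIntegral_congr_fun measurableSet_Ioi fun t (ht : 0 < t) => ?_
  have hr : (0 : ℝ) < (1 + t)⁻¹ := by positivity
  have h1t : (1 + t : ℂ) ≠ 0 := by exact_mod_cast (by positivity : (1 + t : ℝ) ≠ 0)
  have hu : ((t / (1 + t) : ℝ) : ℂ) = t * ((1 + t)⁻¹ : ℝ) := by push_cast; ring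
  have hv : 1 - ((t / (1 + t) : ℝ) : ℂ) = ((1 + t)⁻¹ : ℝ) := by
    push_cast
    field_simp
    ring
  have hpow : ((1 + t : ℂ)⁻¹) ^ (s - 1) * ((1 + t : ℂ)⁻¹) ^ (1 - s - 1) = 1 + t := by
    rw [← Complex.cpow_add _ _ (inv_ne_zero h1t), show s - 1 + (1 - s - 1) = -1 by ring,
      Complex.cpow_neg_one, inv_inv]
  rw [hv, hu, Complex.mul_cpow_ofReal_nonneg ht.le hr.le, abs_of_pos (by positivity),
    Complex.real_smul, smul_eq_mul]
  push_cast
  rw [mul_assoc (_ ^ _), hpow]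
  field_simp

theorem sech_eq_inv_cosh (t : ℝ) : sech t = (cosh t)⁻¹ := by
  rw [sech, cosh_eq, inv_div]

theorem sech_pos (t : ℝ) : 0 < sech t := by
  rw [sech_eq_inv_cosh]
  exact inv_pos.2 (cosh_pos t)

theorem continuous_sech : Continuous sech := by
  simp_rw [funext sech_eq_inv_cosh]
  exact continuous_cosh.inv₀ fun t => (cosh_pos t).ne'

theorem sech_le_four_mul_inv_one_add_sq (t : ℝ) : sech t ≤ 4 * (1 + t ^ 2)⁻¹ := by
  have hexp : 1 + |t| + |t| ^ 2 / 2 ≤ exp |t| := quadratic_le_exp_of_nonneg (abs_nonneg t)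
  have hcosh : exp |t| / 2 ≤ cosh t := by
    rw [← cosh_abs, cosh_eq]
    linarith [exp_pos (-|t|)]
  rw [sech_eq_inv_cosh, ← div_eq_mul_inv, inv_eq_one_div,
    div_le_div_iff₀ (cosh_pos t) (by positivity)]
  nlinarith [sq_abs t, abs_nonneg t]

theorem integrable_sech : Integrable sech := by
  refine (integrable_inv_one_add_sq.const_mul 4).mono' continuous_sech.aestronglyMeasurable ?_
  refine Filter.Eventually.of_forall fun t => ?_
  rw [norm_of_nonneg (sech_pos t).le]
  exact sech_le_four_mul_inv_one_add_sq t

theorem exp_neg_half_mul_div_one_add_exp_neg (v : ℝ) :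
    exp (-(1 / 2) * v) / (1 + exp (-v)) = sech (v / 2) / 2 := by
  rw [sech]
  field_simp
  rw [mul_add, ← exp_add, ← exp_add]
  ring_nf
  rw [exp_zero]

theorem integral_cos_mul_sech_half (τ : ℝ) :
    ∫ u, cos (τ * u) * sech (u / 2) = 2 * π * sech (π * τ) := by
  set s : ℂ := 1 / 2 + τ * Complex.I with hs
  have hs_re : s.re = 1 / 2 := by simp [hs]
  have hs_im : s.im = τ := by simp [hs]
  have hsin : Complex.sin (π * s) = cosh (π * τ) := by
    rw [hs, show (π : ℂ) * (1 / 2 + τ * Complex.I) = ((π * τ : ℝ) : ℂ) * Complex.I + π / 2 by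
      push_cast; ring, Complex.sin_add_pi_div_two, Complex.cos_mul_I, Complex.ofReal_cosh]
  have hg (v : ℝ) :
      rexp (-(1 / 2) * v) • (1 + (rexp (-v) : ℂ))⁻¹ = ((sech (v / 2) / 2 : ℝ) : ℂ) := by
    rw [← exp_neg_half_mul_div_one_add_exp_neg, Complex.real_smul]
    push_cast
    ring
  have hm := mellin_inv_one_add (s := s) (by rw [hs_re]; norm_num) (by rw [hs_re]; norm_num)
  rw [mellin_eq_fourier, fourier_real_eq_integral_exp_smul, hs_re, hs_im, hsin] at hm
  simp_rw [hg, smul_eq_mul, ← Complex.ofReal_div] at hm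
  have hint : Integrable fun v : ℝ =>
      Complex.exp (↑(-2 * π * v * (τ / (2 * π))) * Complex.I) * ((sech (v / 2) / 2 : ℝ) : ℂ) :=
    ((integrable_sech.comp_div two_ne_zero).div_const 2).ofReal.bdd_mul (c := 1) (by fun_prop)
      (Filter.Eventually.of_forall fun v => (Complex.norm_exp_ofReal_mul_I _).le)
  have hre := (integral_re hint).trans (congrArg Complex.re hm)
  simp only [RCLike.re_to_complex, Complex.mul_re, Complex.ofReal_re, Complex.ofReal_im, mul_zero,
    sub_zero, Complex.exp_ofReal_mul_I_re] at hre
  have hcos (v : ℝ) : cos (-2 * π * v * (τ / (2 * π))) * (sech (v / 2) / 2) =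
      cos (τ * v) * sech (v / 2) / 2 := by
    rw [show -2 * π * v * (τ / (2 * π)) = -(τ * v) by field_simp, cos_neg]
    ring
  simp_rw [hcos, integral_div] at hre
  rw [sech_eq_inv_cosh]
  field_simp at hre ⊢
  linarith

theorem integrable_kChi : Integrable kChi :=
  integrable_sech.comp_mul_left' pi_ne_zero

theorem integrable_cos_mul_kChi (b : ℝ) : Integrable fun ω => cos (b * ω) * kChi ω :=
  integrable_kChi.bdd_mul (c := 1) (by fun_prop) (Filter.Eventually.of_forall fun ω => by
    simpa using abs_cos_le_one (b * ω))

theorem integral_cos_mul_kChi (b : ℝ) : ∫ ω, cos (b * ω) * kChi ω = sech (b / 2) := by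
  have hscale :=
    Measure.integral_comp_mul_left (fun u => cos (b / (2 * π) * u) * sech (u / 2)) (2 * π)
  have hpt (ω : ℝ) : cos (b / (2 * π) * (2 * π * ω)) * sech (2 * π * ω / 2) =
      cos (b * ω) * kChi ω := by
    rw [kChi]
    congr 2 <;> field_simp
  simp only [hpt, integral_cos_mul_sech_half, smul_eq_mul] at hscale
  rw [hscale, abs_of_pos (by positivity)]
  field_simp

theorem integral_kChi : ∫ ω, kChi ω = 1 := by
  simpa [sech, one_add_one_eq_two] using integral_cos_mul_kChi 0

theorem h_eq_add_sub_mul_cos {x y : ℝ} (hx : 0 ≤ x) (hy : 0 ≤ y) (ω : ℝ) :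
    h x y ω = x + y - 2 * (√x * √y) * cos ((log x - log y) * ω) := by
  rw [h, show (log x - log y) * ω = ω * log x - ω * log y by ring, cos_sub]
  linear_combination √x ^ 2 * sin_sq_add_cos_sq (ω * log x) +
    √y ^ 2 * sin_sq_add_cos_sq (ω * log y) + sq_sqrt hx + sq_sqrt hy

theorem sech_log_sub_div_two {x y : ℝ} (hx : 0 < x) (hy : 0 < y) :
    sech ((log x - log y) / 2) = 2 * (√x * √y) / (x + y) := by
  have hsx := sqrt_pos.2 hx
  have hsy := sqrt_pos.2 hy
  rw [show (log x - log y) / 2 = log √x - log √y by rw [log_sqrt hx.le, log_sqrt hy.le]; ring,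
    sech, neg_sub, exp_sub, exp_sub, exp_log hsx, exp_log hsy]
  field_simp
  rw [sq_sqrt hx.le, sq_sqrt hy.le]

/-- kernel representation of the one-dimensional symmetrized χ² divergence. -/
theorem chiSq_kernel_representation :
    ∀ x ∈ Set.Ioc (0 : ℝ) 1, ∀ y ∈ Set.Ioc (0 : ℝ) 1,
      ∫ ω : ℝ, h x y ω * kChi ω = fChi x y := by
  rintro x ⟨hx, -⟩ y ⟨hy, -⟩
  set b := log x - log y
  calc ∫ ω, h x y ω * kChi ω
      = ∫ ω, (x + y) * kChi ω - 2 * (√x * √y) * (cos (b * ω) * kChi ω) := by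
        congr 1 with ω
        rw [h_eq_add_sub_mul_cos hx.le hy.le]
        ring
    _ = (x + y) * (∫ ω, kChi ω) - 2 * (√x * √y) * ∫ ω, cos (b * ω) * kChi ω := by
        rw [integral_sub (integrable_kChi.const_mul _) ((integrable_cos_mul_kChi b).const_mul _),
          integral_const_mul, integral_const_mul]
    _ = (x + y) - 2 * (√x * √y) * (2 * (√x * √y) / (x + y)) := by
        rw [integral_kChi, integral_cos_mul_kChi, sech_log_sub_div_two hx hy, mul_one]
    _ = fChi x y := by
        rw [fChi]
        field_simp
        rw [sq_sqrt hx.le, sq_sqrt hy.le]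
        ring
end

section
/- For all x, y ∈ [0,1], f_H(x,y) ≤ 2·f_J(x,y), i.e., (√x − √y)² ≤ 2·(x·ln(2x/(x+y)) + y·ln(2y/(x+y))). -/
open Real MeasureTheory

theorem fH_le_fChi {x y : ℝ} (hx : 0 ≤ x) (hy : 0 ≤ y) : fH x y ≤ fChi x y := by
  rcases (add_nonneg hx hy).eq_or_lt with hxy | hxy
  · have hx0 : x = 0 := by linarith
    have hy0 : y = 0 := by linarith
    simp [fH, fChi, hx0, hy0]
  have hsx := sq_sqrt hx
  have hsy := sq_sqrt hy
  have hsum : x + y ≤ (√x + √y) ^ 2 := by nlinarith [sqrt_nonneg x, sqrt_nonneg y]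
  rw [fH, fChi, le_div_iff₀ hxy]
  calc (√x - √y) ^ 2 * (x + y) ≤ (√x - √y) ^ 2 * (√x + √y) ^ 2 := by gcongr
    _ = (x - y) ^ 2 := by
      rw [← mul_pow, show (√x - √y) * (√x + √y) = x - y by linear_combination hsx - hsy]

theorem Real.two_mul_le_log_one_add_sub_log_one_sub {t : ℝ} (h0 : 0 ≤ t) (h1 : t < 1) :
    2 * t ≤ log (1 + t) - log (1 - t) := by
  have hs := hasSum_log_sub_log_of_abs_lt_one (abs_lt.2 ⟨by linarith, h1⟩)
  simpa using sum_le_hasSum (Finset.range 1) (fun k _ ↦ by positivity) hs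

theorem Real.hasDerivAt_mul_log_one_add_add_mul_log_one_sub_sub_sq {t : ℝ} (h0 : -1 < t)
    (h1 : t < 1) :
    HasDerivAt (fun t ↦ (1 + t) * log (1 + t) + (1 - t) * log (1 - t) - t ^ 2)
      (log (1 + t) - log (1 - t) - 2 * t) t := by
  have hp := (hasDerivAt_mul_log (x := 1 + t) (by linarith)).comp t
    ((hasDerivAt_id t).const_add 1)
  have hm := (hasDerivAt_mul_log (x := 1 - t) (by linarith)).comp t
    ((hasDerivAt_id t).const_sub 1)
  exact ((hp.add hm).sub (hasDerivAt_pow 2 t)).congr_deriv (by push_cast; ring)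

theorem Real.sq_le_mul_log_one_add_add_mul_log_one_sub {t : ℝ} (ht : |t| ≤ 1) :
    t ^ 2 ≤ (1 + t) * log (1 + t) + (1 - t) * log (1 - t) := by
  set G : ℝ → ℝ := fun t ↦ (1 + t) * log (1 + t) + (1 - t) * log (1 - t) - t ^ 2
  have hG : MonotoneOn G (Set.Icc 0 1) := by
    refine monotoneOn_of_deriv_nonneg (convex_Icc 0 1) (by fun_prop) ?_ ?_
    all_goals
      rw [interior_Icc]
      rintro s ⟨hs0, hs1⟩
      have hG' := hasDerivAt_mul_log_one_add_add_mul_log_one_sub_sub_sq (by linarith) hs1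
    · exact hG'.differentiableAt.differentiableWithinAt
    · rw [hG'.deriv]
      linarith [two_mul_le_log_one_add_sub_log_one_sub hs0.le hs1]
  have hG_nonneg {s : ℝ} (hs0 : 0 ≤ s) (hs1 : s ≤ 1) :
      s ^ 2 ≤ (1 + s) * log (1 + s) + (1 - s) * log (1 - s) := by
    have := hG ⟨le_rfl, zero_le_one⟩ ⟨hs0, hs1⟩ hs0
    norm_num [G] at this
    linarith
  obtain ⟨ht0, ht1⟩ := abs_le.1 ht
  rcases le_total 0 t with h | h
  · exact hG_nonneg h ht1
  · have := hG_nonneg (s := -t) (by linarith) (by linarith)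
    rw [neg_sq, ← sub_eq_add_neg, sub_neg_eq_add] at this
    linarith

theorem two_mul_fJ_eq {x y : ℝ} (hxy : 0 < x + y) :
    2 * fJ x y = (x + y) * ((1 + (x - y) / (x + y)) * log (1 + (x - y) / (x + y)) +
      (1 - (x - y) / (x + y)) * log (1 - (x - y) / (x + y))) := by
  have hp : 1 + (x - y) / (x + y) = 2 * x / (x + y) := by field_simp; ring
  have hm : 1 - (x - y) / (x + y) = 2 * y / (x + y) := by field_simp; ring
  rw [fJ, hp, hm]
  field_simp

theorem fChi_le_two_mul_fJ {x y : ℝ} (hx : 0 ≤ x) (hy : 0 ≤ y) : fChi x y ≤ 2 * fJ x y := by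
  rcases (add_nonneg hx hy).eq_or_lt with hxy | hxy
  · have hx0 : x = 0 := by linarith
    have hy0 : y = 0 := by linarith
    simp [fJ, fChi, hx0, hy0]
  have ht : |(x - y) / (x + y)| ≤ 1 := by
    rw [abs_div, abs_of_pos hxy, div_le_one hxy, abs_sub_le_iff]
    constructor <;> linarith
  calc fChi x y = (x + y) * ((x - y) / (x + y)) ^ 2 := by rw [fChi]; field_simp
    _ ≤ 2 * fJ x y := by
      rw [two_mul_fJ_eq hxy]
      exact mul_le_mul_of_nonneg_left (sq_le_mul_log_one_add_add_mul_log_one_sub ht) hxy.le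

/-- `f_H(x,y) ≤ 2·f_J(x,y)` for `x, y ∈ [0,1]`. -/
theorem hellinger_le_two_js :
    ∀ x ∈ Set.Icc (0 : ℝ) 1, ∀ y ∈ Set.Icc (0 : ℝ) 1,
      fH x y ≤ 2 * fJ x y :=
  fun _ hx _ hy ↦ (fH_le_fChi hx.1 hy.1).trans (fChi_le_two_mul_fJ hx.1 hy.1)
end

section
/- For all x, y ∈ (0,1] and all ω ∈ ℝ: h(x,y,ω) ≤ f_H(x,y)·(1 + 2|ω|)². -/
open Real MeasureTheory

/-!
`h x y ω` is the squared distance between `√x e^{iω log x}` and `√y e^{iω log y}`, so it equals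
`(√x - √y)² + 2√x√y (1 - cos θ)` with `θ = ω (log x - log y)`, and `1 - cos θ ≤ θ² / 2`.
The remaining term is controlled by the geometric–logarithmic mean inequality
`√(ab) |log a - log b| ≤ |a - b|` (i.e. `|t| ≤ 2 |sinh (t/2)|`), applied to `a = √x`, `b = √y`;
this gives `h ≤ (1 + 4ω²) f_H ≤ (1 + 2|ω|)² f_H`.
-/

lemma h_eq_fH_add (x y ω : ℝ) :
    h x y ω = fH x y + 2 * √x * √y * (1 - cos (ω * (log x - log y))) := by
  have hcos : cos (ω * (log x - log y)) =
      cos (ω * log x) * cos (ω * log y) + sin (ω * log x) * sin (ω * log y) := by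
    rw [mul_sub, cos_sub]
  rw [h, fH, hcos]
  linear_combination √x ^ 2 * sin_sq_add_cos_sq (ω * log x) +
    √y ^ 2 * sin_sq_add_cos_sq (ω * log y)

lemma sq_le_sinh_sq (t : ℝ) : t ^ 2 ≤ sinh t ^ 2 := by
  rw [← sq_abs t, ← sq_abs (sinh t), abs_sinh]
  exact pow_le_pow_left₀ (abs_nonneg t) (self_le_sinh_iff.mpr (abs_nonneg t)) 2

lemma exp_sub_exp_sq (p q : ℝ) :
    (exp p - exp q) ^ 2 = exp (p + q) * (2 * sinh ((p - q) / 2)) ^ 2 := by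
  have hp : exp p = exp ((p + q) / 2) * exp ((p - q) / 2) := by rw [← exp_add]; ring_nf
  have hq : exp q = exp ((p + q) / 2) * exp (-((p - q) / 2)) := by rw [← exp_add]; ring_nf
  have hpq : exp (p + q) = exp ((p + q) / 2) ^ 2 := by rw [← exp_nat_mul]; ring_nf
  rw [hp, hq, hpq, sinh_eq]
  ring

lemma mul_mul_log_sub_log_sq_le {a b : ℝ} (ha : 0 < a) (hb : 0 < b) :
    a * b * (log a - log b) ^ 2 ≤ (a - b) ^ 2 := by
  have hsinh := sq_le_sinh_sq ((log a - log b) / 2)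
  have hexp := exp_sub_exp_sq (log a) (log b)
  rw [exp_log ha, exp_log hb, exp_add, exp_log ha, exp_log hb] at hexp
  rw [hexp]
  nlinarith [mul_pos ha hb]

lemma h_le_fH_mul {x y : ℝ} (hx : 0 < x) (hy : 0 < y) (ω : ℝ) :
    h x y ω ≤ fH x y * (1 + 4 * ω ^ 2) := by
  have hlog : √x * √y * (log x - log y) ^ 2 ≤ 4 * fH x y := by
    have := mul_mul_log_sub_log_sq_le (sqrt_pos.mpr hx) (sqrt_pos.mpr hy)
    rw [log_sqrt hx.le, log_sqrt hy.le] at this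
    rw [fH]
    linarith
  have hcos := one_sub_sq_div_two_le_cos (x := ω * (log x - log y))
  have hxy : 0 ≤ √x * √y := by positivity
  rw [h_eq_fH_add]
  nlinarith [mul_le_mul_of_nonneg_left hcos hxy, mul_le_mul_of_nonneg_left hlog (sq_nonneg ω)]

/-- `h(x,y,ω) ≤ f_H(x,y)·(1 + 2|ω|)²`. -/
theorem h_le_hellinger_weighted :
    ∀ x ∈ Set.Ioc (0 : ℝ) 1, ∀ y ∈ Set.Ioc (0 : ℝ) 1, ∀ ω : ℝ,
      h x y ω ≤ fH x y * (1 + 2 * |ω|) ^ 2 := by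
  rintro x ⟨hx, -⟩ y ⟨hy, -⟩ ω
  calc h x y ω ≤ fH x y * (1 + 4 * ω ^ 2) := h_le_fH_mul hx hy ω
    _ ≤ fH x y * (1 + 2 * |ω|) ^ 2 := by
      gcongr
      · exact sq_nonneg _
      · nlinarith [abs_nonneg ω, sq_abs ω]
end

section
/- (Deterministic additive-error embedding of χ² into ℓ₂²) There is an absolute constant C > 0 such that for every integer d ≥ 1 and every ε ∈ (0,1) there exist an integer m ≤ C·(d²/ε)·ln(d/ε) and a map φ : Δ_d → ℝ^m such that for all p, q ∈ Δ_d: |‖φ(p) − φ(q)‖₂² − χ²(p,q)| ≤ ε. -/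
open Real

/-- The symmetrized χ² divergence on the simplex `Δ_d`. -/
noncomputable def chiSq {d : ℕ} (p q : Fin d → ℝ) : ℝ := ∑ i, fChi (p i) (q i)

/-!
Since `1 / s = ∫₀^∞ e^{-st} dt`, for `x, y ≥ 0` we have
`f_χ(x, y) = x + y - 4xy / (x + y) = 2 ∫₀^∞ (x e^{-xt} - y e^{-yt})² dt`,
so `χ²(p, q)` is a squared `L²` distance between the curves `t ↦ √2 pᵢ e^{-pᵢ t}`. A left Riemann
sum on the geometric grid `t_k = t₀ rᵏ`, `k < K`, turns it into a squared Euclidean distance in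
`d K` dimensions. For the integral of `e^{-st}` the relative error of this sum is at most
`(r - 1) + s t₀ + e^{-s t₀ rᴷ}`. Taking `t₀` and `r - 1` of order `ε` controls the first two
terms; the truncation terms, weighted by the masses `pᵢ, qᵢ`, add up to `O(d / (t₀ rᴷ))`, which is
`O(ε)` once `K ≈ (1 / ε) log (d / ε)`.
-/

open Finset

-- These two compare `a (r - 1) e^{-a}` with `∫ e^{-t}` over the cells `[a, a r]` and `[a / r, a]`.
lemma exp_neg_sub_exp_neg_mul_le (a r : ℝ) :
    exp (-a) - exp (-(a * r)) ≤ a * (r - 1) * exp (-a) := by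
  have hsplit : exp (-(a * r)) = exp (-(a * (r - 1))) * exp (-a) := by
    rw [← exp_add]; ring_nf
  rw [hsplit]
  nlinarith [one_sub_le_exp_neg (a * (r - 1)), exp_pos (-a)]

lemma mul_sub_one_mul_exp_neg_le {r : ℝ} (hr : 0 < r) (a : ℝ) :
    a * (r - 1) * exp (-a) ≤ r * (exp (-(a / r)) - exp (-a)) := by
  have hsplit : exp (-(a / r)) = exp (a * (r - 1) / r) * exp (-a) := by
    rw [← exp_add]; congr 1; field_simp; ring
  calc a * (r - 1) * exp (-a) = r * (a * (r - 1) / r * exp (-a)) := by field_simp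
    _ ≤ r * ((exp (a * (r - 1) / r) - 1) * exp (-a)) := by
        gcongr; linarith [add_one_le_exp (a * (r - 1) / r)]
    _ = r * (exp (-(a / r)) - exp (-a)) := by rw [hsplit]; ring

lemma mul_exp_neg_mul_le_inv {T : ℝ} (hT : 0 < T) (u : ℝ) : u * exp (-(u * T)) ≤ T⁻¹ := by
  have h : u * T * exp (-(u * T)) ≤ 1 := by
    have hexp : exp (u * T) * exp (-(u * T)) = 1 := by rw [← exp_add, add_neg_cancel, exp_zero]
    nlinarith [add_one_le_exp (u * T), exp_pos (-(u * T))]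
  calc u * exp (-(u * T)) = u * T * exp (-(u * T)) / T := by field_simp
    _ ≤ 1 / T := by gcongr
    _ = T⁻¹ := one_div T

-- Left Riemann sum of `∫₀^∞ e^{-st} dt = 1/s` on the geometric grid `t_k = t₀ rᵏ`, `k < K`.
noncomputable def geomRiemannSum (t₀ r : ℝ) (K : ℕ) (s : ℝ) : ℝ :=
  ∑ k ∈ range K, t₀ * r ^ k * (r - 1) * exp (-(s * (t₀ * r ^ k)))

section GeomRiemannSum

variable {t₀ r s : ℝ} (K : ℕ)

lemma one_sub_le_mul_geomRiemannSum :
    1 - s * t₀ - exp (-(s * (t₀ * r ^ K))) ≤ s * geomRiemannSum t₀ r K s := by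
  calc 1 - s * t₀ - exp (-(s * (t₀ * r ^ K)))
      ≤ exp (-(s * (t₀ * r ^ 0))) - exp (-(s * (t₀ * r ^ K))) := by
        simpa using one_sub_le_exp_neg (s * t₀)
    _ ≤ s * geomRiemannSum t₀ r K s := by
        rw [← sum_range_sub' (fun k => exp (-(s * (t₀ * r ^ k)))), geomRiemannSum, mul_sum]
        refine sum_le_sum fun k _ => ?_
        have h := exp_neg_sub_exp_neg_mul_le (s * (t₀ * r ^ k)) r
        rw [show s * (t₀ * r ^ k) * r = s * (t₀ * r ^ (k + 1)) by ring] at h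
        linear_combination h

lemma mul_geomRiemannSum_le (ht₀ : 0 ≤ t₀) (hr : 1 ≤ r) (hs : 0 ≤ s) :
    s * geomRiemannSum t₀ r K s ≤ r := by
  have hr₀ : 0 < r := by linarith
  have hfirst : exp (-(s * (t₀ * r ^ 0) / r)) ≤ 1 := exp_le_one_iff.mpr (by
    have : 0 ≤ s * (t₀ * r ^ 0) / r := by positivity
    linarith)
  calc s * geomRiemannSum t₀ r K s
      ≤ r * (exp (-(s * (t₀ * r ^ 0) / r)) - exp (-(s * (t₀ * r ^ K) / r))) := by
        rw [← sum_range_sub' (fun k => exp (-(s * (t₀ * r ^ k) / r))), geomRiemannSum, mul_sum,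
          mul_sum]
        refine sum_le_sum fun k _ => ?_
        have h := mul_sub_one_mul_exp_neg_le hr₀ (s * (t₀ * r ^ k))
        rw [show s * (t₀ * r ^ (k + 1)) / r = s * (t₀ * r ^ k) by field_simp; ring]
        linear_combination h
    _ ≤ r := by nlinarith [exp_pos (-(s * (t₀ * r ^ K) / r))]

lemma abs_mul_geomRiemannSum_sub_one_le (ht₀ : 0 ≤ t₀) (hr : 1 ≤ r) (hs : 0 ≤ s) :
    |s * geomRiemannSum t₀ r K s - 1| ≤ (r - 1) + s * t₀ + exp (-(s * (t₀ * r ^ K))) := by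
  have hlo := one_sub_le_mul_geomRiemannSum (t₀ := t₀) (r := r) (s := s) K
  have hup := mul_geomRiemannSum_le K ht₀ hr hs
  rw [abs_le]
  constructor <;> nlinarith [exp_pos (-(s * (t₀ * r ^ K))), mul_nonneg hs ht₀]

lemma mul_abs_mul_geomRiemannSum_sub_one_le {a : ℝ} (ht₀ : 0 < t₀) (hr : 1 ≤ r) (ha : 0 ≤ a)
    (has : a ≤ s) (hs : s ≤ 2) :
    a * |s * geomRiemannSum t₀ r K s - 1| ≤ a * (r - 1 + 2 * t₀) + (t₀ * r ^ K)⁻¹ := by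
  have hT : 0 < t₀ * r ^ K := by positivity
  have herr := abs_mul_geomRiemannSum_sub_one_le K ht₀.le hr (ha.trans has)
  have htail : a * exp (-(s * (t₀ * r ^ K))) ≤ (t₀ * r ^ K)⁻¹ :=
    (mul_le_mul_of_nonneg_right has (exp_pos _).le).trans (mul_exp_neg_mul_le_inv hT s)
  calc a * |s * geomRiemannSum t₀ r K s - 1|
      ≤ a * ((r - 1) + s * t₀ + exp (-(s * (t₀ * r ^ K)))) := by gcongr
    _ = a * (r - 1) + a * (s * t₀) + a * exp (-(s * (t₀ * r ^ K))) := by ring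
    _ ≤ a * (r - 1) + a * (2 * t₀) + (t₀ * r ^ K)⁻¹ := by gcongr
    _ = a * (r - 1 + 2 * t₀) + (t₀ * r ^ K)⁻¹ := by ring

end GeomRiemannSum

lemma fChi_eq_add_sub_div (x y : ℝ) : fChi x y = x + y - 4 * x * y / (x + y) := by
  rcases eq_or_ne (x + y) 0 with h | h
  · simp [fChi, h]
  · rw [fChi]; field_simp; ring

-- `fChi x y = 2 ∫₀^∞ (x e^{-xt} - y e^{-yt})² dt`, discretized as in `geomRiemannSum`.
noncomputable def chiSqRiemannSum (t₀ r : ℝ) (K : ℕ) (x y : ℝ) : ℝ :=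
  ∑ k ∈ range K, 2 * (t₀ * r ^ k * (r - 1)) *
    (x * exp (-(x * (t₀ * r ^ k))) - y * exp (-(y * (t₀ * r ^ k)))) ^ 2

lemma chiSqRiemannSum_eq (t₀ r : ℝ) (K : ℕ) (x y : ℝ) :
    chiSqRiemannSum t₀ r K x y =
      x * (2 * x * geomRiemannSum t₀ r K (2 * x)) - 4 * x * y * geomRiemannSum t₀ r K (x + y)
        + y * (2 * y * geomRiemannSum t₀ r K (2 * y)) := by
  simp only [chiSqRiemannSum, geomRiemannSum, mul_sum, ← sum_sub_distrib, ← sum_add_distrib]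
  refine sum_congr rfl fun k _ => ?_
  set t := t₀ * r ^ k
  have hxx : exp (-(x * t)) ^ 2 = exp (-(2 * x * t)) := by rw [← exp_nat_mul]; ring_nf
  have hyy : exp (-(y * t)) ^ 2 = exp (-(2 * y * t)) := by rw [← exp_nat_mul]; ring_nf
  have hxy : exp (-(x * t)) * exp (-(y * t)) = exp (-((x + y) * t)) := by rw [← exp_add]; ring_nf
  linear_combination (2 * t * (r - 1)) * (x ^ 2 * hxx + y ^ 2 * hyy - 2 * x * y * hxy)

lemma abs_chiSqRiemannSum_sub_fChi_le {t₀ r x y : ℝ} (K : ℕ) (ht₀ : 0 < t₀) (hr : 1 ≤ r)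
    (hx : x ∈ Set.Icc (0 : ℝ) 1) (hy : y ∈ Set.Icc (0 : ℝ) 1) :
    |chiSqRiemannSum t₀ r K x y - fChi x y|
      ≤ 2 * (x + y) * (r - 1 + 2 * t₀) + 3 * (t₀ * r ^ K)⁻¹ := by
  obtain ⟨hx₀, hx₁⟩ := hx
  obtain ⟨hy₀, hy₁⟩ := hy
  set c := 4 * x * y / (x + y)
  have hf : fChi x y = x + y - c := fChi_eq_add_sub_div x y
  have hc₀ : 0 ≤ c := by positivity
  have hcle : c ≤ x + y := div_le_of_le_mul₀ (by positivity) (by positivity) (by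
    nlinarith [sq_nonneg (x - y)])
  have hc : c * (x + y) = 4 * x * y := by
    rcases eq_or_lt_of_le (add_nonneg hx₀ hy₀) with h | h
    · obtain rfl : x = 0 := by linarith
      obtain rfl : y = 0 := by linarith
      simp
    · exact div_mul_cancel₀ _ h.ne'
  clear_value c
  set E := fun s => s * geomRiemannSum t₀ r K s - 1
  have hsplit : chiSqRiemannSum t₀ r K x y - fChi x y
      = x * E (2 * x) - c * E (x + y) + y * E (2 * y) := by
    simp only [E, chiSqRiemannSum_eq, hf]
    linear_combination geomRiemannSum t₀ r K (x + y) * hc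
  have h₁ := mul_abs_mul_geomRiemannSum_sub_one_le (s := 2 * x) K ht₀ hr hx₀ (by linarith)
    (by linarith)
  have h₂ := mul_abs_mul_geomRiemannSum_sub_one_le K ht₀ hr hc₀ hcle (by linarith)
  have h₃ := mul_abs_mul_geomRiemannSum_sub_one_le (s := 2 * y) K ht₀ hr hy₀ (by linarith)
    (by linarith)
  have hw : 0 ≤ r - 1 + 2 * t₀ := by linarith
  rw [hsplit]
  calc |x * E (2 * x) - c * E (x + y) + y * E (2 * y)|
      ≤ |x * E (2 * x)| + |-(c * E (x + y))| + |y * E (2 * y)| := by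
        rw [sub_eq_add_neg]; exact abs_add_three _ _ _
    _ = x * |E (2 * x)| + c * |E (x + y)| + y * |E (2 * y)| := by
        simp only [abs_neg, abs_mul, abs_of_nonneg hx₀, abs_of_nonneg hc₀, abs_of_nonneg hy₀]
    _ ≤ 2 * (x + y) * (r - 1 + 2 * t₀) + 3 * (t₀ * r ^ K)⁻¹ := by
        nlinarith [mul_le_mul_of_nonneg_right hcle hw]

noncomputable def chiSqFeature (t₀ r : ℝ) (K : ℕ) {ι : Type*} (p : ι → ℝ) :
    EuclideanSpace ℝ (ι × Fin K) :=
  WithLp.toLp 2 fun ik =>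
    √(2 * (t₀ * r ^ (ik.2 : ℕ) * (r - 1))) * (p ik.1 * exp (-(p ik.1 * (t₀ * r ^ (ik.2 : ℕ)))))

lemma norm_chiSqFeature_sub_sq {t₀ r : ℝ} (K : ℕ) (ht₀ : 0 ≤ t₀) (hr : 1 ≤ r) {ι : Type*}
    [Fintype ι] (p q : ι → ℝ) :
    ‖chiSqFeature t₀ r K p - chiSqFeature t₀ r K q‖ ^ 2 =
      ∑ i, chiSqRiemannSum t₀ r K (p i) (q i) := by
  rw [EuclideanSpace.real_norm_sq_eq, Fintype.sum_prod_type]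
  refine sum_congr rfl fun i _ => ?_
  rw [chiSqRiemannSum, ← Fin.sum_univ_eq_sum_range]
  refine sum_congr rfl fun k _ => ?_
  have hw : 0 ≤ 2 * (t₀ * r ^ (k : ℕ) * (r - 1)) := by
    have : 0 ≤ r - 1 := by linarith
    positivity
  simp only [chiSqFeature, PiLp.sub_apply, ← mul_sub, mul_pow, sq_sqrt hw]

lemma abs_norm_chiSqFeature_sub_sq_sub_chiSq_le {t₀ r : ℝ} (K : ℕ) (ht₀ : 0 < t₀) (hr : 1 ≤ r)
    {d : ℕ} {p q : Fin d → ℝ} (hp : p ∈ stdSimplex ℝ (Fin d)) (hq : q ∈ stdSimplex ℝ (Fin d)) :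
    |‖chiSqFeature t₀ r K p - chiSqFeature t₀ r K q‖ ^ 2 - chiSq p q|
      ≤ 4 * (r - 1 + 2 * t₀) + 3 * d * (t₀ * r ^ K)⁻¹ := by
  rw [norm_chiSqFeature_sub_sq K ht₀.le hr, chiSq, ← sum_sub_distrib]
  calc |∑ i, (chiSqRiemannSum t₀ r K (p i) (q i) - fChi (p i) (q i))|
      ≤ ∑ i, |chiSqRiemannSum t₀ r K (p i) (q i) - fChi (p i) (q i)| := abs_sum_le_sum_abs _ _
    _ ≤ ∑ i, (2 * (p i + q i) * (r - 1 + 2 * t₀) + 3 * (t₀ * r ^ K)⁻¹) :=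
        sum_le_sum fun i _ => abs_chiSqRiemannSum_sub_fChi_le K ht₀ hr
          (mem_Icc_of_mem_stdSimplex hp i) (mem_Icc_of_mem_stdSimplex hq i)
    _ = 4 * (r - 1 + 2 * t₀) + 3 * d * (t₀ * r ^ K)⁻¹ := by
        simp only [sum_add_distrib, ← sum_mul, ← mul_sum, hp.2, hq.2, sum_const, card_univ,
          Fintype.card_fin, nsmul_eq_mul]
        ring

lemma one_half_le_log_div {d : ℕ} (hd : 2 ≤ d) {ε : ℝ} (hε₀ : 0 < ε) (hε₁ : ε < 1) :
    1 / 2 ≤ log (d / ε) := by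
  have hdε : 2 ≤ (d : ℝ) / ε := by
    rw [le_div_iff₀ hε₀]; have : (2 : ℝ) ≤ d := by exact_mod_cast hd
    nlinarith
  have := log_le_log two_pos hdε
  linarith [log_two_gt_d9]

lemma chiSq_error_budget_le {d K : ℕ} (hd : 2 ≤ d) {ε : ℝ} (hε₀ : 0 < ε) (hε₁ : ε < 1)
    (hK : 288 * log (d / ε) / ε ≤ K) :
    4 * (exp (ε / 32) - 1 + 2 * (ε / 32)) + 3 * d * (ε / 32 * exp (ε / 32) ^ K)⁻¹ ≤ ε := by
  have hd' : (2 : ℝ) ≤ d := by exact_mod_cast hd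
  have hu : 2 ≤ (d : ℝ) / ε := by rw [le_div_iff₀ hε₀]; nlinarith
  have hstep : exp (ε / 32) - 1 ≤ ε / 16 := by
    have := abs_exp_sub_one_le (x := ε / 32) (by rw [abs_of_pos (by positivity)]; linarith)
    rw [abs_of_pos (by positivity : 0 < ε / 32)] at this
    linarith [le_abs_self (exp (ε / 32) - 1)]
  have hgrowth : ((d : ℝ) / ε) ^ 9 ≤ exp (ε / 32) ^ K := by
    rw [← exp_nat_mul, ← exp_log (by positivity : 0 < (d : ℝ) / ε), ← exp_nat_mul]
    apply exp_le_exp.mpr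
    rw [div_le_iff₀ hε₀] at hK
    push_cast; nlinarith
  have hT : 6 * d / ε ≤ ε / 32 * exp (ε / 32) ^ K := by
    have h7 : (2 : ℝ) ^ 7 ≤ ((d : ℝ) / ε) ^ 7 := by gcongr
    calc 6 * d / ε ≤ 4 * ε * ((d : ℝ) / ε) ^ 2 := by
          rw [div_pow, div_le_iff₀ hε₀]; field_simp; nlinarith
      _ = ε / 32 * (((d : ℝ) / ε) ^ 2 * 2 ^ 7) := by ring
      _ ≤ ε / 32 * (((d : ℝ) / ε) ^ 2 * ((d : ℝ) / ε) ^ 7) := by gcongr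
      _ = ε / 32 * ((d : ℝ) / ε) ^ 9 := by ring
      _ ≤ ε / 32 * exp (ε / 32) ^ K := by gcongr
  have htail : 3 * d * (ε / 32 * exp (ε / 32) ^ K)⁻¹ ≤ ε / 2 := by
    calc 3 * d * (ε / 32 * exp (ε / 32) ^ K)⁻¹ ≤ 3 * d * (6 * d / ε)⁻¹ := by gcongr
      _ = ε / 2 := by field_simp; ring
  linarith

lemma natCast_mul_ceil_le {d : ℕ} (hd : 2 ≤ d) {ε : ℝ} (hε₀ : 0 < ε) (hε₁ : ε < 1) :
    ((d * ⌈288 * log (d / ε) / ε⌉₊ : ℕ) : ℝ) ≤ 290 * ((d : ℝ) ^ 2 / ε) * log (d / ε) := by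
  have hlog := one_half_le_log_div hd hε₀ hε₁
  have hd' : (1 : ℝ) ≤ d := by exact_mod_cast (by omega : 1 ≤ d)
  have hK : (⌈288 * log (d / ε) / ε⌉₊ : ℝ) ≤ 290 * log (d / ε) / ε := by
    have hceil := Nat.ceil_lt_add_one (by positivity : 0 ≤ 288 * log (d / ε) / ε)
    have hone : 1 ≤ 2 * log (d / ε) / ε := by rw [le_div_iff₀ hε₀]; linarith
    calc (⌈288 * log (d / ε) / ε⌉₊ : ℝ) ≤ 288 * log (d / ε) / ε + 2 * log (d / ε) / ε := by
          linarith
      _ = 290 * log (d / ε) / ε := by ring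
  push_cast
  calc (d : ℝ) * ⌈288 * log (d / ε) / ε⌉₊ ≤ d * (290 * log (d / ε) / ε) := by gcongr
    _ ≤ d * (d * (290 * log (d / ε) / ε)) := le_mul_of_one_le_left (by positivity) hd'
    _ = 290 * ((d : ℝ) ^ 2 / ε) * log (d / ε) := by ring

/-- deterministic additive-error embedding of χ² into `ℓ₂²` in
`O((d²/ε)·log(d/ε))` dimensions. -/
theorem chiSq_additive_embedding :
    ∃ C : ℝ, 0 < C ∧
      ∀ d : ℕ, 1 ≤ d → ∀ ε : ℝ, ε ∈ Set.Ioo (0 : ℝ) 1 →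
        ∃ (m : ℕ) (φ : (Fin d → ℝ) → EuclideanSpace ℝ (Fin m)),
          (m : ℝ) ≤ C * ((d : ℝ) ^ 2 / ε) * Real.log ((d : ℝ) / ε) ∧
          ∀ p ∈ stdSimplex ℝ (Fin d), ∀ q ∈ stdSimplex ℝ (Fin d),
            |‖φ p - φ q‖ ^ 2 - chiSq p q| ≤ ε := by
  refine ⟨290, by norm_num, fun d hd ε ⟨hε₀, hε₁⟩ => ?_⟩
  obtain rfl | hd := hd.eq_or_lt
  -- `log (1 / ε)` can be arbitrarily small, so here the embedding must be zero-dimensional.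
  · refine ⟨0, 0, ?_, fun p hp q hq => ?_⟩
    · have : 0 ≤ log (1 / ε) := log_nonneg (by rw [le_div_iff₀ hε₀]; linarith)
      push_cast
      positivity
    · rw [stdSimplex_unique, Set.mem_singleton_iff] at hp hq
      simp [hp, hq, chiSq, fChi, hε₀.le]
  set K := ⌈288 * log (d / ε) / ε⌉₊
  let e := LinearIsometryEquiv.piLpCongrLeft 2 ℝ ℝ (finProdFinEquiv : Fin d × Fin K ≃ _)
  refine ⟨d * K, fun p => e (chiSqFeature (ε / 32) (exp (ε / 32)) K p),
    natCast_mul_ceil_le hd hε₀ hε₁, fun p hp q hq => ?_⟩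
  rw [← map_sub, LinearIsometryEquiv.norm_map]
  exact (abs_norm_chiSqFeature_sub_sq_sub_chiSq_le K (by positivity) (one_le_exp (by positivity))
    hp hq).trans (chiSq_error_budget_le hd hε₀ hε₁ (Nat.le_ceil _))
end

section
/- (Multiplicative embedding of χ² into ℓ₂²) There is an absolute constant C > 0 such that for every integer d ≥ 1, every ε ∈ (0,1), and every finite set P ⊆ Δ_d with |P| = n ≥ 2, there exist an integer m ≤ C·n²·d³/ε² and a map φ : P → ℝ^m such that for all p, q ∈ P: (1−ε)·χ²(p,q) ≤ ‖φ(p) − φ(q)‖₂² ≤ (1+ε)·χ²(p,q). -/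
open Real

/-!
For `x, y ≥ 0` we have `(x - y)² / (x + y) = x + y - 4xy / (x + y)`, and the harmonic-mean kernel
`xy / (x + y) = ∫₀^∞ x e^{-xt} · y e^{-yt} dt` is positive semidefinite. Summing over coordinates,
`χ²(p, q) = 2 (k(p, p) + k(q, q) - 2 k(p, q))` for the positive semidefinite kernel
`k(p, q) = ∑ᵢ pᵢ qᵢ / (pᵢ + qᵢ)`, so realizing `k` on `n` points as a Gram matrix in `ℝⁿ` embeds
them isometrically: the embedding is exact, with `m = n ≤ n² d³ / ε²`.
-/

open MeasureTheory Set Matrix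

lemma integral_exp_neg_mul_Ioi_zero {s : ℝ} (hs : 0 < s) :
    ∫ t in Ioi (0 : ℝ), exp (-s * t) = s⁻¹ := by
  simpa [div_neg, neg_div, one_div] using integral_exp_mul_Ioi (neg_neg_of_pos hs) 0

lemma memLp_mul_exp_neg_mul {a : ℝ} (ha : 0 ≤ a) :
    MemLp (fun t => a * exp (-a * t)) 2 (volume.restrict (Ioi 0)) := by
  rcases ha.eq_or_lt with rfl | ha
  · simp
  · refine (memLp_two_iff_integrable_sq (by fun_prop)).2 ?_
    have hint := (exp_neg_integrableOn_Ioi 0 (by positivity : 0 < 2 * a)).const_mul (a ^ 2)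
    refine hint.congr (ae_of_all _ fun t => ?_)
    simp only [mul_pow, ← exp_nat_mul]
    ring_nf

lemma integral_mul_exp_neg_mul_mul_exp_neg_mul {a b : ℝ} (ha : 0 ≤ a) (hb : 0 ≤ b) :
    ∫ t in Ioi (0 : ℝ), a * exp (-a * t) * (b * exp (-b * t)) = a * b / (a + b) := by
  rcases (add_nonneg ha hb).eq_or_lt with hab | hab
  · obtain rfl : a = 0 := by linarith
    simp
  · calc ∫ t in Ioi (0 : ℝ), a * exp (-a * t) * (b * exp (-b * t))
        = ∫ t in Ioi (0 : ℝ), a * b * exp (-(a + b) * t) := by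
          congr 1; ext t
          rw [neg_add, add_mul, exp_add]; ring
      _ = a * b / (a + b) := by
          rw [integral_const_mul, integral_exp_neg_mul_Ioi_zero hab, div_eq_mul_inv]

lemma posSemidef_harmonicMean {ι : Type*} [Finite ι] (x : ι → ℝ) (hx : ∀ j, 0 ≤ x j) :
    (Matrix.of fun j k => x j * x k / (x j + x k)).PosSemidef := by
  have hgram : (Matrix.of fun j k => x j * x k / (x j + x k))
      = gram ℝ fun j => (memLp_mul_exp_neg_mul (hx j)).toLp := by
    ext j k
    rw [gram_apply, L2.inner_def, of_apply,
      ← integral_mul_exp_neg_mul_mul_exp_neg_mul (hx j) (hx k)]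
    refine integral_congr_ae ?_
    filter_upwards [(memLp_mul_exp_neg_mul (hx j)).coeFn_toLp,
      (memLp_mul_exp_neg_mul (hx k)).coeFn_toLp] with t hj hk
    rw [hj, hk, real_inner_eq_re_inner, RCLike.inner_apply, conj_trivial, mul_comm]
    rfl
  rw [hgram]
  exact posSemidef_gram ℝ _

noncomputable def harmonicKernel {d : ℕ} (p q : Fin d → ℝ) : ℝ := ∑ i, p i * q i / (p i + q i)

lemma posSemidef_harmonicKernel {ι : Type*} [Finite ι] {d : ℕ} (x : ι → Fin d → ℝ)
    (hx : ∀ j i, 0 ≤ x j i) : (Matrix.of fun j k => harmonicKernel (x j) (x k)).PosSemidef := by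
  have hsum : (Matrix.of fun j k => harmonicKernel (x j) (x k))
      = ∑ i, Matrix.of fun j k => x j i * x k i / (x j i + x k i) := by
    ext j k
    simp [harmonicKernel, Matrix.sum_apply]
  rw [hsum]
  exact posSemidef_sum _ fun i _ => posSemidef_harmonicMean (fun j => x j i) fun j => hx j i

lemma fChi_eq_of_nonneg {a b : ℝ} (ha : 0 ≤ a) (hb : 0 ≤ b) :
    fChi a b = 2 * (a * a / (a + a) + b * b / (b + b) - 2 * (a * b / (a + b))) := by
  rcases ha.eq_or_lt with rfl | ha
  · rcases hb.eq_or_lt with rfl | hb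
    · simp [fChi]
    · simp [fChi]; field_simp; ring
  · rcases hb.eq_or_lt with rfl | hb
    · simp [fChi]; field_simp; ring
    · unfold fChi; field_simp; ring

lemma chiSq_eq_harmonicKernel {d : ℕ} {p q : Fin d → ℝ} (hp : ∀ i, 0 ≤ p i) (hq : ∀ i, 0 ≤ q i) :
    chiSq p q = 2 * (harmonicKernel p p + harmonicKernel q q - 2 * harmonicKernel p q) := by
  simp only [chiSq, harmonicKernel, fChi_eq_of_nonneg (hp _) (hq _), Finset.mul_sum, ← Finset.sum_add_distrib,
    ← Finset.sum_sub_distrib]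

open scoped MatrixOrder ComplexOrder in
lemma Matrix.PosSemidef.exists_gram_eq {𝕜 ι : Type*} [RCLike 𝕜] [Fintype ι] {K : Matrix ι ι 𝕜}
    (hK : K.PosSemidef) : ∃ v : ι → EuclideanSpace 𝕜 ι, gram 𝕜 v = K := by
  classical
  obtain ⟨B, rfl⟩ := CStarAlgebra.nonneg_iff_eq_star_mul_self.mp hK.nonneg
  refine ⟨fun j => WithLp.toLp 2 fun l => B l j, ?_⟩
  rw [gram_eq_conjTranspose_mul (EuclideanSpace.basisFun ι 𝕜)]
  rfl

lemma exists_sq_dist_eq_chiSq {ι : Type*} [Fintype ι] {d : ℕ} (x : ι → Fin d → ℝ)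
    (hx : ∀ j i, 0 ≤ x j i) :
    ∃ v : ι → EuclideanSpace ℝ ι, ∀ j k, ‖v j - v k‖ ^ 2 = chiSq (x j) (x k) := by
  obtain ⟨w, hw⟩ := (posSemidef_harmonicKernel x hx).exists_gram_eq
  have hinner : ∀ j k, inner ℝ (w j) (w k) = harmonicKernel (x j) (x k) := fun j k => by
    rw [← gram_apply, hw, of_apply]
  refine ⟨fun j => √2 • w j, fun j k => ?_⟩
  rw [← smul_sub, norm_smul, mul_pow, norm_of_nonneg (sqrt_nonneg 2), sq_sqrt zero_le_two,
    norm_sub_sq_real, ← real_inner_self_eq_norm_sq, ← real_inner_self_eq_norm_sq, hinner, hinner,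
    hinner, chiSq_eq_harmonicKernel (hx j) (hx k)]
  ring

/-- multiplicative `(1 ± ε)` embedding of `n` points of `Δ_d` under χ²
into `ℓ₂²` of dimension `O(n²·d³/ε²)`. -/
theorem chiSq_multiplicative_embedding :
    ∃ C : ℝ, 0 < C ∧
      ∀ d n : ℕ, 1 ≤ d → 2 ≤ n → ∀ ε : ℝ, ε ∈ Set.Ioo (0 : ℝ) 1 →
        ∀ P : Finset (Fin d → ℝ),
          (∀ p ∈ P, p ∈ stdSimplex ℝ (Fin d)) → P.card = n →
          ∃ (m : ℕ) (φ : (Fin d → ℝ) → EuclideanSpace ℝ (Fin m)),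
            (m : ℝ) ≤ C * (n : ℝ) ^ 2 * (d : ℝ) ^ 3 / ε ^ 2 ∧
            ∀ p ∈ P, ∀ q ∈ P,
              (1 - ε) * chiSq p q ≤ ‖φ p - φ q‖ ^ 2 ∧
              ‖φ p - φ q‖ ^ 2 ≤ (1 + ε) * chiSq p q := by
  refine ⟨1, one_pos, fun d n hd _ ε ⟨hε₀, hε₁⟩ P hP hcard => ?_⟩
  let e := P.equivFinOfCardEq hcard
  obtain ⟨v, hv⟩ := exists_sq_dist_eq_chiSq (fun j => (e.symm j : Fin d → ℝ))
    fun j => (hP _ (e.symm j).2).1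
  refine ⟨n, fun p => if hp : p ∈ P then v (e ⟨p, hp⟩) else 0, ?_, fun p hp q hq => ?_⟩
  · have hd : (1 : ℝ) ≤ d := by exact_mod_cast hd
    rw [one_mul, le_div_iff₀ (by positivity)]
    calc (n : ℝ) * ε ^ 2 ≤ n * 1 := by gcongr; exact pow_le_one₀ hε₀.le hε₁.le
      _ ≤ (n : ℝ) ^ 2 * 1 := by gcongr; exact_mod_cast Nat.le_self_pow two_ne_zero n
      _ ≤ (n : ℝ) ^ 2 * d ^ 3 := by gcongr; exact one_le_pow₀ hd
  · have hpq : ‖v (e ⟨p, hp⟩) - v (e ⟨q, hq⟩)‖ ^ 2 = chiSq p q := by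
      simpa using hv (e ⟨p, hp⟩) (e ⟨q, hq⟩)
    simp only [hp, hq, dif_pos, hpq]
    have : 0 ≤ ε * chiSq p q := mul_nonneg hε₀.le (hpq ▸ sq_nonneg _)
    constructor <;> linarith
end

section
/- (Local Euclidean structure of f-divergences near the centroid) Let f : (0,∞) → ℝ be convex with f(1) = 0, f'(1) = 0, f''(1) > 0, and suppose f is twice differentiable on a neighborhood of 1 and the third derivative f'''(1) exists. Then for every integer k ≥ 1 and every ε ∈ (0,1) there exist r > 0 and t > 0 such that for all p, q ∈ Δ_k whose coordinates all lie in the interval [1/k − r, 1/k + r]: (1−ε)·‖p−q‖₂² ≤ t·D_f(p,q) ≤ (1+ε)·‖p−q‖₂². -/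
/-!
By the Peano form of Taylor's theorem at `1`, `f (1 + u) = f''(1) / 2 · u² + o(u²)`. Writing
`q_i / p_i = 1 + (q_i - p_i) / p_i`, each term of the divergence is therefore
`p_i f(q_i / p_i) = f''(1) / (2 p_i) · (p_i - q_i)² · (1 + o(1))`, and near the centroid
`p_i ≈ 1 / k`, so `t = 2 / (f''(1) k)` turns `D_f(p, q)` into `‖p - q‖²` up to a factor `1 ± ε`.
-/

open Real Asymptotics Filter Topology

/-- The `f`-divergence `D_f(p,q) = Σ_i p_i · f(q_i / p_i)` on the simplex `Δ_k`. -/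
noncomputable def fDiv {k : ℕ} (f : ℝ → ℝ) (p q : Fin k → ℝ) : ℝ :=
  ∑ i, p i * f (q i / p i)

theorem isLittleO_pow_succ_of_hasDerivAt {g g' : ℝ → ℝ} {n : ℕ} (hg0 : g 0 = 0)
    (hg : ∀ᶠ u in 𝓝 0, HasDerivAt g (g' u) u) (hg' : g' =o[𝓝 0] fun u => u ^ n) :
    g =o[𝓝 0] fun u => u ^ (n + 1) := by
  refine isLittleO_iff.2 fun ε hε => ?_
  obtain ⟨ρ, hρ, hball⟩ := Metric.eventually_nhds_iff_ball.1 (hg.and (isLittleO_iff.1 hg' hε))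
  filter_upwards [Metric.ball_mem_nhds 0 hρ] with u hu
  have hsub : Set.uIcc 0 u ⊆ Metric.ball 0 ρ :=
    (convex_ball 0 ρ).segment_subset (Metric.mem_ball_self hρ) hu |>.trans' (segment_eq_uIcc 0 u).ge
  have hle : ∀ x ∈ Set.uIcc 0 u, |x| ≤ |u| := fun x hx => by
    simpa using Set.abs_sub_left_of_mem_uIcc hx
  have hmvt := Convex.norm_image_sub_le_of_norm_hasDerivWithin_le (f := g) (C := ε * |u| ^ n)
    (fun x hx => (hball x (hsub hx)).1.hasDerivWithinAt)
    (fun x hx => (hball x (hsub hx)).2.trans <| by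
      simpa [abs_pow] using
        mul_le_mul_of_nonneg_left (pow_le_pow_left₀ (abs_nonneg x) (hle x hx) n) hε.le)
    (convex_uIcc 0 u) Set.left_mem_uIcc Set.right_mem_uIcc
  simpa [hg0, abs_pow, pow_succ, mul_assoc] using hmvt

theorem isLittleO_sub_taylor_two {f : ℝ → ℝ} {x₀ : ℝ}
    (hf : ∀ᶠ x in 𝓝 x₀, DifferentiableAt ℝ f x) (hf' : DifferentiableAt ℝ (deriv f) x₀) :
    (fun u => f (x₀ + u) - f x₀ - deriv f x₀ * u - deriv (deriv f) x₀ / 2 * u ^ 2)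
      =o[𝓝 0] fun u => u ^ 2 := by
  refine isLittleO_pow_succ_of_hasDerivAt (n := 1)
    (g' := fun u => deriv f (x₀ + u) - deriv f x₀ - u * deriv (deriv f) x₀) (by simp) ?_ ?_
  · have hf0 : ∀ᶠ u in 𝓝 (0 : ℝ), DifferentiableAt ℝ f (x₀ + u) :=
      (continuous_const_add x₀).tendsto' 0 x₀ (add_zero x₀) |>.eventually hf
    filter_upwards [hf0] with u hu
    refine HasDerivAt.congr_deriv (((hu.hasDerivAt.comp_const_add x₀ u).sub_const (f x₀)).sub
      ((hasDerivAt_id u).const_mul (deriv f x₀)) |>.sub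
      ((hasDerivAt_pow 2 u).const_mul (deriv (deriv f) x₀ / 2))) ?_
    norm_num
    ring
  · simpa using hasDerivAt_iff_isLittleO_nhds_zero.1 hf'.hasDerivAt

theorem exists_abs_sub_half_mul_sq_le {f : ℝ → ℝ} (hf1 : f 1 = 0) (hf'1 : deriv f 1 = 0)
    (hf : ∀ᶠ x in 𝓝 1, DifferentiableAt ℝ f x) (hf' : DifferentiableAt ℝ (deriv f) 1)
    {δ : ℝ} (hδ : 0 < δ) :
    ∃ r₀ > 0, ∀ u : ℝ, |u| ≤ r₀ → |f (1 + u) - deriv (deriv f) 1 / 2 * u ^ 2| ≤ δ * u ^ 2 := by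
  obtain ⟨ρ, hρ, hball⟩ :=
    Metric.eventually_nhds_iff.1 (isLittleO_iff.1 (isLittleO_sub_taylor_two hf hf') hδ)
  refine ⟨ρ / 2, half_pos hρ, fun u hu => ?_⟩
  have hu' : dist u 0 < ρ := by rw [dist_zero_right, norm_eq_abs]; linarith
  simpa [hf1, hf'1] using hball hu'

theorem abs_mul_apply_div_sub_le {f : ℝ → ℝ} {a b c δ : ℝ} (ha : 0 < a)
    (h : |f (1 + (b - a) / a) - c / 2 * ((b - a) / a) ^ 2| ≤ δ * ((b - a) / a) ^ 2) :
    |a * f (b / a) - c / 2 * (a - b) ^ 2 / a| ≤ δ * (a - b) ^ 2 / a := by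
  have hba : 1 + (b - a) / a = b / a := by field_simp; ring
  have hlhs : a * f (b / a) - c / 2 * (a - b) ^ 2 / a
      = a * (f (b / a) - c / 2 * ((b - a) / a) ^ 2) := by field_simp; ring
  have hrhs : δ * (a - b) ^ 2 / a = a * (δ * ((b - a) / a) ^ 2) := by field_simp; ring
  rw [hba] at h
  rw [hlhs, hrhs, abs_mul, abs_of_pos ha]
  exact mul_le_mul_of_nonneg_left h ha.le

theorem sq_bounds_of_abs_sub_le {a c D K s ε : ℝ} (hc : 0 < c) (hK : 0 < K) (ha : 0 < a)
    (hε : ε < 1) (hs : 0 ≤ s) (hKa : |K * a - 1| ≤ ε / 4)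
    (hD : |D - c / 2 * s / a| ≤ c * ε / 4 * s / a) :
    (1 - ε) * s ≤ 2 / (c * K) * D ∧ 2 / (c * K) * D ≤ (1 + ε) * s := by
  set y := s / (K * a) with hy_def
  have hy : 0 ≤ y := by positivity
  have hs_eq : s = K * a * y := by rw [hy_def]; field_simp
  have hDy : |2 / (c * K) * D - y| ≤ ε / 2 * y := by
    have : 2 / (c * K) * D - y = 2 / (c * K) * (D - c / 2 * s / a) := by
      rw [hy_def]; field_simp
    rw [this, abs_mul, abs_of_pos (by positivity)]
    calc 2 / (c * K) * |D - c / 2 * s / a| ≤ 2 / (c * K) * (c * ε / 4 * s / a) :=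
          mul_le_mul_of_nonneg_left hD (by positivity)
      _ = ε / 2 * y := by rw [hy_def]; field_simp; ring
  obtain ⟨hKa_lo, hKa_hi⟩ := abs_le.1 hKa
  obtain ⟨hDy_lo, hDy_hi⟩ := abs_le.1 hDy
  rw [hs_eq]
  constructor <;> nlinarith [mul_nonneg hy (sq_nonneg ε)]

theorem perspective_sq_bounds_near_centroid {f : ℝ → ℝ} {c ε K r r₀ a b : ℝ} (hc : 0 < c)
    (hε : ε < 1) (hK : 0 < K) (hr : 4 * K * r ≤ min ε r₀)
    (hquad : ∀ u, |u| ≤ r₀ → |f (1 + u) - c / 2 * u ^ 2| ≤ c * ε / 4 * u ^ 2)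
    (ha : a ∈ Set.Icc (1 / K - r) (1 / K + r)) (hb : b ∈ Set.Icc (1 / K - r) (1 / K + r)) :
    (1 - ε) * (a - b) ^ 2 ≤ 2 / (c * K) * (a * f (b / a)) ∧
      2 / (c * K) * (a * f (b / a)) ≤ (1 + ε) * (a - b) ^ 2 := by
  have hKr_ε : K * r ≤ ε / 4 := by linarith [min_le_left ε r₀]
  have hKr_r₀ : K * r ≤ r₀ / 4 := by linarith [min_le_right ε r₀]
  have hKa : |K * a - 1| ≤ K * r := by
    rw [show K * a - 1 = K * (a - 1 / K) by field_simp, abs_mul, abs_of_pos hK]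
    exact mul_le_mul_of_nonneg_left
      (abs_sub_le_iff.2 ⟨by linarith [ha.2], by linarith [ha.1]⟩) hK.le
  obtain ⟨hKa_lo, -⟩ := abs_le.1 hKa
  have hr : 0 ≤ r := by linarith [ha.1.trans ha.2]
  have ha0 : 0 < a := by nlinarith
  have hu : |(b - a) / a| ≤ r₀ := by
    rw [abs_div, abs_of_pos ha0, div_le_iff₀ ha0]
    have hba : |b - a| ≤ 2 * r :=
      abs_sub_le_iff.2 ⟨by linarith [hb.2, ha.1], by linarith [ha.2, hb.1]⟩
    nlinarith
  exact sq_bounds_of_abs_sub_le hc hK ha0 hε (sq_nonneg _) (hKa.trans hKr_ε)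
    (abs_mul_apply_div_sub_le ha0 (hquad _ hu))

theorem fDiv_locally_euclidean_general (f : ℝ → ℝ)
    (hf1 : f 1 = 0)
    (hf'1 : deriv f 1 = 0)
    (hf''1 : 0 < deriv (deriv f) 1)
    (hsmooth : ∀ᶠ x in nhds (1 : ℝ),
      DifferentiableAt ℝ f x ∧ DifferentiableAt ℝ (deriv f) x) :
    ∀ k : ℕ, 1 ≤ k → ∀ ε : ℝ, ε ∈ Set.Ioo (0 : ℝ) 1 →
      ∃ r > (0 : ℝ), ∃ t > (0 : ℝ),
        ∀ p ∈ stdSimplex ℝ (Fin k), ∀ q ∈ stdSimplex ℝ (Fin k),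
          (∀ i, p i ∈ Set.Icc (1 / (k : ℝ) - r) (1 / (k : ℝ) + r)) →
          (∀ i, q i ∈ Set.Icc (1 / (k : ℝ) - r) (1 / (k : ℝ) + r)) →
          (1 - ε) * ∑ i, (p i - q i) ^ 2 ≤ t * fDiv f p q ∧
          t * fDiv f p q ≤ (1 + ε) * ∑ i, (p i - q i) ^ 2 := by
  intro k hk ε ⟨hε0, hε1⟩
  set c := deriv (deriv f) 1
  have hK : (0 : ℝ) < k := by exact_mod_cast hk
  obtain ⟨r₀, hr₀, hquad⟩ := exists_abs_sub_half_mul_sq_le hf1 hf'1 (hsmooth.mono fun _ h => h.1)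
    hsmooth.self_of_nhds.2 (show 0 < c * ε / 4 by positivity)
  refine ⟨min ε r₀ / (4 * k), by positivity, 2 / (c * k), by positivity, ?_⟩
  intro p _ q _ hp hq
  have hr : 4 * k * (min ε r₀ / (4 * k)) ≤ min ε r₀ := (mul_div_cancel₀ _ (by positivity)).le
  have hcoord i := perspective_sq_bounds_near_centroid hf''1 hε1 hK hr hquad (hp i) (hq i)
  simp only [fDiv, Finset.mul_sum]
  exact ⟨Finset.sum_le_sum fun i _ => (hcoord i).1, Finset.sum_le_sum fun i _ => (hcoord i).2⟩

/-- a well-behaved `f`-divergence is `(1 ± ε)`-equivalent, after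
rescaling by some `t > 0`, to squared Euclidean distance in a small ball of radius
`r` around the centroid of the simplex. -/
theorem fDiv_locally_euclidean (f : ℝ → ℝ)
    (hconv : ConvexOn ℝ (Set.Ioi (0 : ℝ)) f)
    (hf1 : f 1 = 0)
    (hf'1 : deriv f 1 = 0)
    (hf''1 : 0 < deriv (deriv f) 1)
    (hsmooth : ∀ᶠ x in nhds (1 : ℝ),
      DifferentiableAt ℝ f x ∧ DifferentiableAt ℝ (deriv f) x)
    (hf'''1 : DifferentiableAt ℝ (deriv (deriv f)) 1) :
    ∀ k : ℕ, 1 ≤ k → ∀ ε : ℝ, ε ∈ Set.Ioo (0 : ℝ) 1 →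
      ∃ r > (0 : ℝ), ∃ t > (0 : ℝ),
        ∀ p ∈ stdSimplex ℝ (Fin k), ∀ q ∈ stdSimplex ℝ (Fin k),
          (∀ i, p i ∈ Set.Icc (1 / (k : ℝ) - r) (1 / (k : ℝ) + r)) →
          (∀ i, q i ∈ Set.Icc (1 / (k : ℝ) - r) (1 / (k : ℝ) + r)) →
          (1 - ε) * ∑ i, (p i - q i) ^ 2 ≤ t * fDiv f p q ∧
          t * fDiv f p q ≤ (1 + ε) * ∑ i, (p i - q i) ^ 2 :=
  fDiv_locally_euclidean_general f hf1 hf'1 hf''1 hsmooth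
end
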